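/- Every finite simple graph G contains a set S ⊆ V(G) such that every connected component of G − S is factor-critical, and such that there is a matching in G matching the vertices of S to vertices lying in pairwise distinct components of G − S. -/

import Mathlib

/-!
Choose `S` maximizing the deficiency `#(odd components of G - S) - |S|`, and among such sets
one of maximal size. Adding to `S` a vertex of an even component, or a vertex `v` of a component
`K` together with a set `S'` of deficiency at least `2` in `K - v`, would keep the deficiency and
enlarge `S`. Hence every component is odd, and (inducting on the vertex set) every `K - v` has a
perfect matching: its own such set `S'` is matched into distinct factor-critical components of
`K - v - S'`, and by parity these are all of them unless the deficiency of `S'` is at least `2`.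
Finally, removing `X ⊆ S` from `S` only merges the components adjacent to `X`, so maximality of
the deficiency is Hall's condition for matching `S` into distinct components.
-/

open SimpleGraph

/-- A graph is factor-critical if deleting any vertex leaves a graph
with a perfect matching (formalized via a matching whose vertex set is
everything except that vertex). -/
def FactorCritical {W : Type*} (H : SimpleGraph W) : Prop :=
  ∀ v : W, ∃ M : H.Subgraph, M.IsMatching ∧ M.verts = {v}ᶜ

namespace SimpleGraph

variable {V : Type*} {G : SimpleGraph V} {A B K K' T : Set V} {v w x y : V}

def AdjIn (G : SimpleGraph V) (A : Set V) (a b : V) : Prop := a ∈ A ∧ b ∈ A ∧ G.Adj a b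

/- Components are vertex sets in `V`, so that components of `G[A]` for different `A` can be
compared; `G.compIn A v = {v}` when `v ∉ A`. -/
def compIn (G : SimpleGraph V) (A : Set V) (v : V) : Set V :=
  {w | Relation.ReflTransGen (G.AdjIn A) v w}

def IsCompIn (G : SimpleGraph V) (A K : Set V) : Prop := ∃ v ∈ A, K = G.compIn A v

instance : Std.Symm (G.AdjIn A) := ⟨fun _ _ ⟨ha, hb, h⟩ => ⟨hb, ha, h.symm⟩⟩

lemma mem_compIn_self (A : Set V) (v : V) : v ∈ G.compIn A v := .refl

lemma compIn_subset (hv : v ∈ A) : G.compIn A v ⊆ A := by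
  intro w hw
  induction hw with
  | refl => exact hv
  | tail _ h _ => exact h.2.1

lemma compIn_eq_of_mem (h : w ∈ G.compIn A v) : G.compIn A w = G.compIn A v := by
  ext x
  exact ⟨h.trans, (Relation.ReflTransGen.stdSymm.symm _ _ h).trans⟩

lemma mem_compIn_of_adj (hx : x ∈ G.compIn A v) (hxA : x ∈ A) (hy : y ∈ A) (h : G.Adj x y) :
    y ∈ G.compIn A v :=
  hx.tail ⟨hxA, hy, h⟩

lemma compIn_mono (h : A ⊆ B) (v : V) : G.compIn A v ⊆ G.compIn B v :=
  fun w => Relation.ReflTransGen.mono (fun _ _ hab => ⟨h hab.1, h hab.2.1, hab.2.2⟩) v w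

lemma compIn_eq_of_closed (hAB : A ⊆ B)
    (hcl : ∀ x ∈ G.compIn A v, ∀ y ∈ B, G.Adj x y → y ∈ G.compIn A v) :
    G.compIn B v = G.compIn A v := by
  refine Set.Subset.antisymm (fun w hw => ?_) (compIn_mono hAB v)
  induction hw with
  | refl => exact mem_compIn_self A v
  | tail _ h ih => exact hcl _ ih _ h.2.1 h.2.2

lemma isCompIn_compIn (hv : v ∈ A) : G.IsCompIn A (G.compIn A v) := ⟨v, hv, rfl⟩

namespace IsCompIn

lemma subset (h : G.IsCompIn A K) : K ⊆ A := by
  obtain ⟨v, hv, rfl⟩ := h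
  exact compIn_subset hv

lemma nonempty (h : G.IsCompIn A K) : K.Nonempty := by
  obtain ⟨v, -, rfl⟩ := h
  exact ⟨v, mem_compIn_self A v⟩

lemma compIn_eq (h : G.IsCompIn A K) (hw : w ∈ K) : G.compIn A w = K := by
  obtain ⟨v, -, rfl⟩ := h
  exact compIn_eq_of_mem hw

lemma mem_of_adj (h : G.IsCompIn A K) (hx : x ∈ K) (hy : y ∈ A) (hxy : G.Adj x y) :
    y ∈ K := by
  rw [← h.compIn_eq hx]
  exact mem_compIn_of_adj (mem_compIn_self A x) (h.subset hx) hy hxy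

lemma eq_of_mem (h : G.IsCompIn A K) (h' : G.IsCompIn A K') (hx : x ∈ K) (hx' : x ∈ K') :
    K = K' :=
  (h.compIn_eq hx).symm.trans (h'.compIn_eq hx')

lemma disjoint (h : G.IsCompIn A K) (h' : G.IsCompIn A K') (hne : K ≠ K') : Disjoint K K' :=
  Set.disjoint_left.2 fun _ hx hx' => hne (h.eq_of_mem h' hx hx')

lemma of_closed (h : G.IsCompIn A K) (hAB : A ⊆ B)
    (hcl : ∀ x ∈ K, ∀ y ∈ B, G.Adj x y → y ∈ K) : G.IsCompIn B K := by
  obtain ⟨v, hv, rfl⟩ := h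
  exact ⟨v, hAB hv, (compIn_eq_of_closed hAB hcl).symm⟩

end IsCompIn

lemma compIn_sdiff_eq_of_notMem (hK : G.IsCompIn A K) (hT : T ⊆ K) (hw : w ∈ A \ T)
    (hwK : w ∉ K) : G.compIn (A \ T) w = G.compIn A w := by
  refine (compIn_eq_of_closed Set.sdiff_subset fun x hx y hy hxy => ?_).symm
  have hxA : x ∈ A \ T := compIn_subset hw hx
  have hyw : y ∈ G.compIn A w :=
    mem_compIn_of_adj (compIn_mono Set.sdiff_subset w hx) hxA.1 hy hxy
  have hyK : y ∉ K := fun hyK =>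
    hwK (hK.compIn_eq hyK ▸ (compIn_eq_of_mem hyw).symm ▸ mem_compIn_self A w)
  exact mem_compIn_of_adj hx hxA ⟨hy, fun hyT => hyK (hT hyT)⟩ hxy

lemma compIn_sdiff_eq_of_mem (hK : G.IsCompIn A K) (hw : w ∈ K \ T) :
    G.compIn (A \ T) w = G.compIn (K \ T) w :=
  compIn_eq_of_closed (Set.sdiff_subset_sdiff_left hK.subset) fun x hx _ hy hxy =>
    have hxK : x ∈ K \ T := compIn_subset hw hx
    mem_compIn_of_adj hx hxK ⟨hK.mem_of_adj hxK.1 hy.1 hxy, hy.2⟩ hxy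

lemma isCompIn_sdiff_iff (hK : G.IsCompIn A K) (hT : T ⊆ K) :
    G.IsCompIn (A \ T) K' ↔ (G.IsCompIn A K' ∧ K' ≠ K) ∨ G.IsCompIn (K \ T) K' := by
  constructor
  · rintro ⟨w, hw, rfl⟩
    by_cases hwK : w ∈ K
    · exact .inr ⟨w, ⟨hwK, hw.2⟩, compIn_sdiff_eq_of_mem hK ⟨hwK, hw.2⟩⟩
    · refine .inl ⟨⟨w, hw.1, compIn_sdiff_eq_of_notMem hK hT hw hwK⟩, fun h => ?_⟩
      exact hwK (h ▸ mem_compIn_self _ w)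
  · rintro (⟨⟨w, hw, rfl⟩, hne⟩ | ⟨w, hw, rfl⟩)
    · have hwK : w ∉ K := fun h => hne (hK.compIn_eq h)
      have hwT : w ∈ A \ T := ⟨hw, fun h => hwK (hT h)⟩
      exact ⟨w, hwT, (compIn_sdiff_eq_of_notMem hK hT hwT hwK).symm⟩
    · exact ⟨w, ⟨hK.subset hw.1, hw.2⟩, (compIn_sdiff_eq_of_mem hK hw).symm⟩

lemma reachable_induce_iff {A : Set V} (x y : A) :
    (G.induce A).Reachable x y ↔ (y : V) ∈ G.compIn A x := by
  rw [reachable_iff_reflTransGen]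
  refine ⟨fun h => Relation.ReflTransGen.lift (p := G.AdjIn A) Subtype.val
    (fun a b hab => ⟨a.2, b.2, hab⟩) x y h, fun h => ?_⟩
  suffices ∀ b, Relation.ReflTransGen (G.AdjIn A) x b → ∀ hb : b ∈ A,
      Relation.ReflTransGen (G.induce A).Adj x ⟨b, hb⟩ from this y h y.2
  intro b hxb
  induction hxb with
  | refl => exact fun _ => .refl
  | tail _ hbc ih => exact fun _ => (ih hbc.1).tail hbc.2.2

lemma isCompIn_image_supp {A : Set V} (c : (G.induce A).ConnectedComponent) :
    G.IsCompIn A (Subtype.val '' c.supp) := by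
  obtain ⟨x, rfl⟩ := c.exists_rep
  refine ⟨x, x.2, Set.ext fun w => ⟨?_, fun hw => ?_⟩⟩
  · rintro ⟨w, hw, rfl⟩
    exact (reachable_induce_iff x w).1 (ConnectedComponent.exact hw).symm
  · exact ⟨⟨w, compIn_subset x.2 hw⟩,
      ConnectedComponent.sound ((reachable_induce_iff x _).2 hw).symm, rfl⟩

def IsFactorCriticalOn (G : SimpleGraph V) (K : Set V) : Prop :=
  ∀ v ∈ K, ∃ M : G.Subgraph, M.IsMatching ∧ M.verts = K \ {v}

lemma IsFactorCriticalOn.exists_isMatching_insert (h : G.IsFactorCriticalOn K) (hv : v ∉ K)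
    (hw : w ∈ K) (hvw : G.Adj v w) :
    ∃ M : G.Subgraph, M.IsMatching ∧ M.verts = insert v K := by
  obtain ⟨M, hM, hMv⟩ := h w hw
  refine ⟨G.subgraphOfAdj hvw ⊔ M, (Subgraph.IsMatching.subgraphOfAdj hvw).sup hM ?_, ?_⟩
  · rw [support_subgraphOfAdj, hM.support_eq_verts, hMv]
    simp [hv]
  · rw [Subgraph.verts_sup, subgraphOfAdj_verts, hMv, Set.insert_union,
      Set.singleton_union, Set.insert_sdiff_singleton, Set.insert_eq_of_mem hw]

lemma exists_isMatching_union {S : Set V} (hSA : Disjoint S A) (g : V → V)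
    (hg : ∀ s ∈ S, G.Adj s (g s) ∧ g s ∈ A)
    (hinj : Set.InjOn (fun s => G.compIn A (g s)) S)
    (hsurj : ∀ K, G.IsCompIn A K → ∃ s ∈ S, G.compIn A (g s) = K)
    (hfc : ∀ K, G.IsCompIn A K → G.IsFactorCriticalOn K) :
    ∃ M : G.Subgraph, M.IsMatching ∧ M.verts = S ∪ A := by
  have hK (s : S) : G.IsCompIn A (G.compIn A (g s)) := isCompIn_compIn (hg s s.2).2
  have hnotMem (s t : S) : (s : V) ∉ G.compIn A (g t) :=
    fun h => Set.disjoint_left.1 hSA s.2 ((hK t).subset h)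
  choose M hM hMv using fun s : S =>
    (hfc _ (hK s)).exists_isMatching_insert (hnotMem s s) (mem_compIn_self A (g s)) (hg s s.2).1
  refine ⟨⨆ s, M s, Subgraph.IsMatching.iSup hM fun s t hst => ?_, ?_⟩
  · change Disjoint (M s).support (M t).support
    rw [(hM s).support_eq_verts, (hM t).support_eq_verts, hMv, hMv,
      Set.disjoint_insert_left, Set.disjoint_insert_right, Set.mem_insert_iff]
    refine ⟨not_or.2 ⟨fun h => hst (Subtype.ext h), hnotMem s t⟩, hnotMem t s,
      (hK s).disjoint (hK t) fun h => hst (Subtype.ext (hinj s.2 t.2 h))⟩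
  · ext x
    simp only [Subgraph.verts_iSup, hMv, Set.mem_iUnion, Set.mem_insert_iff, Set.mem_union]
    constructor
    · rintro ⟨s, rfl | hx⟩
      exacts [.inl s.2, .inr ((hK s).subset hx)]
    · rintro (hx | hx)
      · exact ⟨⟨x, hx⟩, .inl rfl⟩
      · obtain ⟨s, hs, hsx⟩ := hsurj _ (isCompIn_compIn hx)
        exact ⟨⟨s, hs⟩, .inr (hsx ▸ mem_compIn_self A x)⟩

lemma factorCritical_induce_induce {A : Set V} {B : Set A}
    (h : G.IsFactorCriticalOn (Subtype.val '' B)) : FactorCritical ((G.induce A).induce B) := by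
  intro v
  let f := (Embedding.induce (G := G) A).comp (Embedding.induce B)
  obtain ⟨M, hM, hMv⟩ := h v ⟨v, v.2, rfl⟩
  refine ⟨M.comap f.toHom, fun x hx => ?_, ?_⟩
  · obtain ⟨w, hxw, hw⟩ := hM hx
    have hwB : w ∈ Subtype.val '' B := (hMv ▸ M.edge_vert hxw.symm).1
    obtain ⟨w, hwB, rfl⟩ := hwB
    exact ⟨⟨w, hwB⟩, ⟨hxw.adj_sub, hxw⟩, fun y hy => f.injective (hw _ hy.2)⟩
  · ext x
    change f x ∈ M.verts ↔ x ≠ v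
    rw [hMv, show f x = x.1.1 from rfl]
    simp [Subtype.ext_iff]

def oddCompsIn (G : SimpleGraph V) (A : Set V) : Set (Set V) := {K | G.IsCompIn A K ∧ Odd K.ncard}

lemma oddCompsIn_empty : G.oddCompsIn ∅ = ∅ :=
  Set.eq_empty_of_forall_notMem fun _ ⟨⟨_, hv, _⟩, _⟩ => hv

variable [Finite V]

lemma ncard_oddCompsIn_sdiff (hK : G.IsCompIn A K) (hT : T ⊆ K) :
    (G.oddCompsIn (A \ T)).ncard + (if Odd K.ncard then 1 else 0) =
      (G.oddCompsIn A).ncard + (G.oddCompsIn (K \ T)).ncard := by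
  have hsplit : G.oddCompsIn (A \ T) = (G.oddCompsIn A \ {K}) ∪ G.oddCompsIn (K \ T) := by
    ext K'
    simp only [oddCompsIn, Set.mem_ofPred_eq, Set.mem_union, Set.mem_sdiff,
      Set.mem_singleton_iff, isCompIn_sdiff_iff hK hT]
    tauto
  have hdisj : Disjoint (G.oddCompsIn A \ {K}) (G.oddCompsIn (K \ T)) := by
    refine Set.disjoint_left.2 fun K' ⟨⟨hK', _⟩, hne⟩ ⟨hK'T, _⟩ => ?_
    obtain ⟨x, hx⟩ := hK'T.nonempty
    exact hne (hK'.eq_of_mem hK hx (hK'T.subset hx).1)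
  rw [hsplit, Set.ncard_union_eq hdisj]
  split_ifs with hodd
  · have hKodd : K ∈ G.oddCompsIn A := ⟨hK, hodd⟩
    rw [add_right_comm, Set.ncard_sdiff_singleton_add_one hKodd]
  · rw [Set.sdiff_singleton_eq_self fun h => hodd h.2, add_zero]

theorem even_ncard_add_ncard_oddCompsIn (A : Set V) :
    Even (A.ncard + (G.oddCompsIn A).ncard) := by
  induction hn : A.ncard using Nat.strong_induction_on generalizing A with
  | _ n ih =>
  obtain rfl | ⟨v, hv⟩ := A.eq_empty_or_nonempty
  · simp [← hn, oddCompsIn_empty]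
  have hK := isCompIn_compIn (G := G) hv
  have hsplit := ncard_oddCompsIn_sdiff hK subset_rfl
  rw [Set.sdiff_self, oddCompsIn_empty, Set.ncard_empty, add_zero] at hsplit
  have hcard := Set.ncard_sdiff_add_ncard_of_subset hK.subset
  have hpos := hK.nonempty.ncard_pos
  have hrest := ih _ (by omega) (A \ G.compIn A v) rfl
  simp only [Nat.even_iff, Nat.odd_iff] at hrest hsplit ⊢
  split_ifs at hsplit <;> omega

lemma ncard_oddCompsIn_pos (h : Odd A.ncard) : 0 < (G.oddCompsIn A).ncard := by
  have := G.even_ncard_add_ncard_oddCompsIn A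
  rw [Nat.even_iff] at this
  rw [Nat.odd_iff] at h
  omega

lemma IsFactorCriticalOn.odd_ncard (h : G.IsFactorCriticalOn K) (hK : K.Nonempty) :
    Odd K.ncard := by
  obtain ⟨v, hv⟩ := hK
  obtain ⟨M, hM, hMv⟩ := h v hv
  have := Fintype.ofFinite M.verts
  have heven : Even (K \ {v}).ncard := by
    rw [← hMv, Set.ncard_eq_toFinset_card']
    exact hM.even_card
  rw [← Set.ncard_sdiff_singleton_add_one hv]
  exact heven.add_one

noncomputable def deficiency (G : SimpleGraph V) (U T : Set V) : ℤ :=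
  (G.oddCompsIn (U \ T)).ncard - T.ncard

def IsMaxBarrier (G : SimpleGraph V) (U S : Set V) : Prop :=
  S ⊆ U ∧ ∀ T ⊆ U, toLex (G.deficiency U T, T.ncard) ≤ toLex (G.deficiency U S, S.ncard)

lemma exists_isMaxBarrier (G : SimpleGraph V) (U : Set V) : ∃ S, G.IsMaxBarrier U S :=
  Set.exists_max_image {T | T ⊆ U} (fun T => toLex (G.deficiency U T, T.ncard)) (Set.toFinite _)
    ⟨∅, Set.empty_subset U⟩

namespace IsMaxBarrier

variable {U S : Set V}

lemma ncard_oddCompsIn_sdiff_lt (hS : G.IsMaxBarrier U S) (hK : G.IsCompIn (U \ S) K)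
    (hTK : T ⊆ K) (hT : T.Nonempty) :
    (G.oddCompsIn (K \ T)).ncard < T.ncard + if Odd K.ncard then 1 else 0 := by
  have hST : Disjoint S T :=
    Set.disjoint_left.2 fun x hxS hxT => (hK.subset (hTK hxT)).2 hxS
  have hmax := hS.2 (S ∪ T) (Set.union_subset hS.1 fun x hx => (hK.subset (hTK hx)).1)
  rw [Prod.Lex.toLex_le_toLex, deficiency, deficiency, Set.ncard_union_eq hST,
    ← Set.sdiff_sdiff] at hmax
  have hsplit := ncard_oddCompsIn_sdiff hK hTK
  have hTpos := hT.ncard_pos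
  split_ifs at hsplit ⊢ <;> omega

lemma odd_ncard (hS : G.IsMaxBarrier U S) (hK : G.IsCompIn (U \ S) K) : Odd K.ncard := by
  by_contra heven
  obtain ⟨c, hc⟩ := hK.nonempty
  have hlt := hS.ncard_oddCompsIn_sdiff_lt hK (Set.singleton_subset_iff.2 hc) ⟨c, rfl⟩
  rw [if_neg heven, Set.ncard_singleton] at hlt
  have hodd : Odd (K \ {c}).ncard := by
    rw [← Set.ncard_sdiff_singleton_add_one hc, Nat.odd_add_one] at heven
    exact not_not.1 heven
  have := G.ncard_oddCompsIn_pos hodd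
  omega

lemma ncard_le_ncard_adjacent (hS : G.IsMaxBarrier U S) {X : Set V} (hXS : X ⊆ S) :
    X.ncard ≤ {K | G.IsCompIn (U \ S) K ∧ ∃ x ∈ X, ∃ y ∈ K, G.Adj x y}.ncard := by
  set N := {K | G.IsCompIn (U \ S) K ∧ ∃ x ∈ X, ∃ y ∈ K, G.Adj x y}
  have hsurvive : G.oddCompsIn (U \ S) \ N ⊆ G.oddCompsIn (U \ (S \ X)) := by
    rintro K ⟨⟨hK, hodd⟩, hKN⟩
    refine ⟨hK.of_closed (Set.sdiff_subset_sdiff_right Set.sdiff_subset)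
      fun x hx y hy hxy => ?_, hodd⟩
    by_cases hyS : y ∈ S
    · exact absurd ⟨hK, y, of_not_not fun h => hy.2 ⟨hyS, h⟩, x, hx, hxy.symm⟩ hKN
    · exact hK.mem_of_adj hx ⟨hy.1, hyS⟩ hxy
  have hle := (Set.ncard_le_ncard_sdiff_add_ncard (G.oddCompsIn (U \ S)) N).trans
    (Nat.add_le_add_right (Set.ncard_le_ncard hsurvive) _)
  have hmax := (Prod.Lex.toLex_le_toLex.1 (hS.2 (S \ X) (Set.sdiff_subset.trans hS.1))).elim
    le_of_lt (fun h => h.1.le)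
  rw [deficiency, deficiency] at hmax
  have := Set.ncard_sdiff_add_ncard_of_subset hXS
  omega

lemma exists_injOn (hS : G.IsMaxBarrier U S) :
    ∃ g : V → V, (∀ s ∈ S, G.Adj s (g s) ∧ g s ∈ U \ S) ∧
      Set.InjOn (fun s => G.compIn (U \ S) (g s)) S := by
  classical
  have := Fintype.ofFinite V
  obtain ⟨f, hf, hfS⟩ := (Fintype.all_card_le_filter_rel_iff_exists_injective
    fun (s : S) K => G.IsCompIn (U \ S) K ∧ ∃ y ∈ K, G.Adj s y).1 fun A => by
      convert hS.ncard_le_ncard_adjacent (X := Subtype.val '' (A : Set S)) (by simp) using 1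
      · rw [Set.ncard_image_of_injective _ Subtype.val_injective, Set.ncard_coe_finset]
      · rw [← Set.ncard_coe_finset, Finset.coe_filter]
        congr 1
        ext K
        simp only [Finset.mem_coe, Finset.mem_univ, true_and,
          Set.mem_ofPred_eq, Set.mem_image, Subtype.exists, exists_and_right, exists_eq_right]
        constructor
        · rintro ⟨s, hs, hK, y, hy, hsy⟩
          exact ⟨hK, s, hs, y, hy, hsy⟩
        · rintro ⟨hK, s, hs, y, hy, hsy⟩
          exact ⟨s, hs, hK, y, hy, hsy⟩
  choose y hyf hy using fun s => (hfS s).2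
  refine ⟨fun x => if hx : x ∈ S then y ⟨x, hx⟩ else x, fun s hs => ?_,
    fun s hs t ht hst => ?_⟩
  · simp only [dif_pos hs]
    exact ⟨hy ⟨s, hs⟩, (hfS _).1.subset (hyf _)⟩
  · simp only [dif_pos hs, dif_pos ht, (hfS _).1.compIn_eq (hyf _)] at hst
    exact congrArg Subtype.val (hf hst)

end IsMaxBarrier

structure IsGallaiEdmondsSet (G : SimpleGraph V) (U S : Set V) : Prop where
  subset : S ⊆ U
  isFactorCriticalOn : ∀ K, G.IsCompIn (U \ S) K → G.IsFactorCriticalOn K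
  exists_matching : ∃ g : V → V, (∀ s ∈ S, G.Adj s (g s) ∧ g s ∈ U \ S) ∧
    Set.InjOn (fun s => G.compIn (U \ S) (g s)) S

lemma IsGallaiEdmondsSet.exists_isMatching_or {U S : Set V}
    (h : G.IsGallaiEdmondsSet U S) (hU : Even U.ncard) :
    (∃ M : G.Subgraph, M.IsMatching ∧ M.verts = U) ∨
      S.ncard + 2 ≤ (G.oddCompsIn (U \ S)).ncard := by
  obtain ⟨g, hg, hinj⟩ := h.exists_matching
  by_cases hsurj : ∀ K, G.IsCompIn (U \ S) K → ∃ s ∈ S, G.compIn (U \ S) (g s) = K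
  · obtain ⟨M, hM, hMv⟩ :=
      exists_isMatching_union Set.disjoint_sdiff_right g hg hinj hsurj h.isFactorCriticalOn
    exact .inl ⟨M, hM, hMv.trans (Set.union_sdiff_cancel h.subset)⟩
  push Not at hsurj
  obtain ⟨K₀, hK₀, hmiss⟩ := hsurj
  have hodd (K) (hK : G.IsCompIn (U \ S) K) : K ∈ G.oddCompsIn (U \ S) :=
    ⟨hK, (h.isFactorCriticalOn K hK).odd_ncard hK.nonempty⟩
  have hinto : S.ncard + 1 ≤ (G.oddCompsIn (U \ S)).ncard := by
    rw [← Set.ncard_sdiff_singleton_add_one (hodd K₀ hK₀), Nat.add_le_add_iff_right]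
    exact Set.ncard_le_ncard_of_injOn _
      (fun s hs => ⟨hodd _ (isCompIn_compIn (hg s hs).2), hmiss s hs⟩) hinj
  -- `|S| + #odd` is even since `|U|` is, so `|S| + 1 = #odd` is impossible
  have hparity := G.even_ncard_add_ncard_oddCompsIn (U \ S)
  have hcard := Set.ncard_sdiff_add_ncard_of_subset h.subset
  rw [Nat.even_iff] at hparity hU
  omega

lemma IsMaxBarrier.isFactorCriticalOn {U S : Set V} (hS : G.IsMaxBarrier U S)
    (ih : ∀ U' ⊂ U, ∃ S', G.IsGallaiEdmondsSet U' S') (hK : G.IsCompIn (U \ S) K) :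
    G.IsFactorCriticalOn K := by
  intro v hv
  have hKU : K ⊆ U := fun x hx => (hK.subset hx).1
  obtain ⟨S', hS'⟩ := ih (K \ {v})
    ⟨Set.sdiff_subset.trans hKU, fun h => (h (hKU hv)).2 rfl⟩
  have heven : Even (K \ {v}).ncard := by
    have hodd := hS.odd_ncard hK
    rwa [← Set.ncard_sdiff_singleton_add_one hv, Nat.odd_add_one, Nat.not_odd_iff_even] at hodd
  refine (hS'.exists_isMatching_or heven).resolve_right fun hlarge => ?_
  have hvS' : v ∉ S' := fun h => (hS'.subset h).2 rfl
  have hlt := hS.ncard_oddCompsIn_sdiff_lt hK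
    (Set.insert_subset hv fun x hx => (hS'.subset hx).1) (Set.insert_nonempty v S')
  rw [if_pos (hS.odd_ncard hK), Set.ncard_insert_of_notMem hvS'] at hlt
  rw [Set.sdiff_sdiff, ← Set.insert_eq] at hlarge
  omega

theorem exists_isGallaiEdmondsSet (G : SimpleGraph V) (U : Set V) :
    ∃ S, G.IsGallaiEdmondsSet U S := by
  induction U using WellFoundedLT.induction with
  | _ U ih =>
  obtain ⟨S, hS⟩ := G.exists_isMaxBarrier U
  exact ⟨S, hS.1, fun K hK => hS.isFactorCriticalOn ih hK, hS.exists_injOn⟩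

end SimpleGraph

theorem stmt_2 {V : Type*} [Fintype V] (G : SimpleGraph V) :
    ∃ S : Set V,
      (∀ c : (G.induce Sᶜ).ConnectedComponent,
          FactorCritical ((G.induce Sᶜ).induce c.supp)) ∧
      ∃ f : V → V,
        (∀ s ∈ S, G.Adj s (f s)) ∧
        (∀ s ∈ S, f s ∉ S) ∧
        (∀ s ∈ S, ∀ s' ∈ S, s ≠ s' → f s ≠ f s') ∧
        (∀ s ∈ S, ∀ s' ∈ S, s ≠ s' →
          ∀ (h : f s ∈ Sᶜ) (h' : f s' ∈ Sᶜ),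
            ¬ (G.induce Sᶜ).Reachable ⟨f s, h⟩ ⟨f s', h'⟩) := by
  obtain ⟨S, -, hfc, g, hg, hinj⟩ := G.exists_isGallaiEdmondsSet Set.univ
  rw [← Set.compl_eq_univ_sdiff] at hfc hg hinj
  refine ⟨S, fun c => factorCritical_induce_induce (hfc _ (isCompIn_image_supp c)), g,
    fun s hs => (hg s hs).1, fun s hs => (hg s hs).2, fun s hs s' hs' hne heq => ?_,
    fun s hs s' hs' hne _ _ hreach => ?_⟩
  · exact hne (hinj hs hs' (congrArg (G.compIn Sᶜ) heq))
  · exact hne (hinj hs hs' (compIn_eq_of_mem ((reachable_induce_iff _ _).1 hreach)).symm)
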